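/- arXiv:2407.11634 — 3 statements merged into one kernel-verified Lean document; each statement's English description precedes it below -/
import Mathlib

section
/- Let F̄ : [0,∞) → [0,1] be a continuous survival function with F̄(0) = 1, F̄ differentiable, and 0 < F̄(t) < 1 for all t > 0. If there exists a constant λ > 0 such that ∫₀ᵗ F̄²(u) du = λ(1 - F̄²(t)) for all t > 0, then F̄(t) = e^{-t/(2λ)} for all t ≥ 0. -/
open Real intervalIntegral

/-!
Write `G t = ∫₀ᵗ F̄²`. The hypothesis, extended to `t = 0` by `F̄ 0 = 1`, says
`l - G = l F̄²` on `[0, ∞)`, so by the fundamental theorem of calculus `l - G` solves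
`y' = -y / l` there with `y 0 = l`. Hence `l - G t = l e^{-t/l}`, i.e. `F̄(t)² = e^{-t/l}`,
and `F̄ ≥ 0` picks the positive square root.
-/

theorem eq_mul_exp_of_hasDerivAt_const_mul {f : ℝ → ℝ} {c : ℝ}
    (hf : ∀ t ≥ 0, HasDerivAt f (c * f t) t) : ∀ t ≥ 0, f t = f 0 * exp (c * t) := by
  intro t ht
  set ψ : ℝ → ℝ := fun s => f s * exp (-(c * s))
  have hψ_deriv : ∀ s ≥ 0, HasDerivAt ψ 0 s := fun s hs => by
    have hexp : HasDerivAt (fun s => exp (-(c * s))) (exp (-(c * s)) * -(c * 1)) s :=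
      (((hasDerivAt_id s).const_mul c).neg).exp
    exact ((hf s hs).mul hexp).congr_deriv (by ring)
  have hψ_const : ψ t = ψ 0 :=
    constant_of_has_deriv_right_zero
      (fun s hs => (hψ_deriv s hs.1).continuousAt.continuousWithinAt)
      (fun s hs => (hψ_deriv s hs.1).hasDerivWithinAt) t ⟨ht, le_rfl⟩
  have hψ_eq : f t * exp (-(c * t)) = f 0 := by simpa [ψ] using hψ_const
  rw [← hψ_eq, mul_assoc, ← exp_add, neg_add_cancel, exp_zero, mul_one]

theorem eq_exp_half_of_sq_eq_exp {x y : ℝ} (hx : 0 ≤ x) (h : x ^ 2 = exp y) :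
    x = exp (y / 2) := by
  have hsq : exp (y / 2) ^ 2 = exp y := by
    rw [sq, ← exp_add, add_halves]
  exact (pow_left_inj₀ hx (exp_pos _).le two_ne_zero).1 (h.trans hsq.symm)

theorem constant_ndse_implies_exponential_general
    (Fbar : ℝ → ℝ) (hcont : Continuous Fbar)
    (h0 : Fbar 0 = 1) (hrange : ∀ t > 0, 0 < Fbar t ∧ Fbar t < 1)
    (l : ℝ) (hl : 0 < l)
    (hconst : ∀ t > 0, (∫ u in (0:ℝ)..t, (Fbar u)^2) = l * (1 - (Fbar t)^2)) :
    ∀ t ≥ 0, Fbar t = Real.exp (-t / (2 * l)) := by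
  set G : ℝ → ℝ := fun t => ∫ u in (0:ℝ)..t, (Fbar u)^2
  have hG_deriv (t : ℝ) : HasDerivAt G (Fbar t ^ 2) t :=
    ((hcont.pow 2).integral_hasStrictDerivAt 0 t).hasDerivAt
  have hG_eq : ∀ t ≥ 0, l - G t = l * Fbar t ^ 2 := by
    intro t ht
    rcases ht.eq_or_lt with rfl | ht
    · simp [G, h0]
    · rw [show G t = _ from hconst t ht]; ring
  have hode : ∀ t ≥ 0, HasDerivAt (fun s => l - G s) (-l⁻¹ * (l - G t)) t := fun t ht =>
    ((hG_deriv t).const_sub l).congr_deriv (by rw [hG_eq t ht]; field_simp)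
  intro t ht
  have hsq : Fbar t ^ 2 = exp (-t / l) := by
    have hsol := eq_mul_exp_of_hasDerivAt_const_mul hode t ht
    rw [hG_eq t ht, hG_eq 0 le_rfl, h0] at hsol
    rw [← mul_right_inj' hl.ne', hsol]
    ring_nf
  have hnonneg : 0 ≤ Fbar t := by
    rcases ht.eq_or_lt with rfl | ht
    · rw [h0]; exact zero_le_one
    · exact (hrange t ht).1.le
  rw [eq_exp_half_of_sq_eq_exp hnonneg hsq]
  ring_nf

/-- If a continuous differentiable survival function `F̄` with `F̄ 0 = 1` and
`0 < F̄ t < 1` for all `t > 0` satisfies `∫₀ᵗ F̄² = λ (1 - F̄²(t))` for all `t > 0`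
with a constant `λ > 0`, then `F̄ t = exp (-t/(2λ))` for all `t ≥ 0`. -/
theorem constant_ndse_implies_exponential
    (Fbar : ℝ → ℝ) (hcont : Continuous Fbar) (hdiff : Differentiable ℝ Fbar)
    (h0 : Fbar 0 = 1) (hrange : ∀ t > 0, 0 < Fbar t ∧ Fbar t < 1)
    (l : ℝ) (hl : 0 < l)
    (hconst : ∀ t > 0, (∫ u in (0:ℝ)..t, (Fbar u)^2) = l * (1 - (Fbar t)^2)) :
    ∀ t ≥ 0, Fbar t = Real.exp (-t / (2 * l)) :=
  constant_ndse_implies_exponential_general Fbar hcont h0 hrange l hl hconst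
end

section
/- The NDSE is constant in t if and only if X is exponentially distributed: for a nonnegative continuous random variable X with differentiable survival function F̄ satisfying F̄(0) = 1 and 0 < F̄(t) < 1 for t > 0, the function η(t) = -(1/2)·(∫₀ᵗ F̄²(u) du)/(1 - F̄²(t)) is constant on (0,∞) if and only if there exists β > 0 such that F̄(t) = e^{-βt} for all t ≥ 0. -/
/-!
If `η ≡ c`, then `∫₀ᵗ F̄² = -2c (1 - F̄(t)²)` for `t > 0`. Differentiating gives
`F̄² = 4c F̄ F̄'`, and since `F̄ > 0` this is the linear equation `F̄' = F̄ / (4c)`, whose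
solution with `F̄(0) = 1` is `exp (t / (4c))`; the rate is positive because `F̄ < 1`.
Conversely, for `F̄(t) = e^{-βt}` one computes `∫₀ᵗ F̄² = (1 - F̄(t)²) / (2β)`, so `η ≡ -1/(4β)`.
-/

open Real intervalIntegral Set

theorem eq_mul_exp_of_hasDerivAt_eq_mul {f : ℝ → ℝ} {c a b : ℝ} (hab : a ≤ b)
    (hf : ContinuousOn f (Icc a b)) (hderiv : ∀ x ∈ Ioo a b, HasDerivAt f (c * f x) x) :
    f b = f a * exp (c * (b - a)) := by
  rcases hab.eq_or_lt with rfl | hab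
  · simp
  set g : ℝ → ℝ := fun x => f x * exp (-c * x)
  have hg_cont : ContinuousOn g (Icc a b) := hf.mul (by fun_prop)
  have hg_deriv : ∀ x ∈ Ioo a b, HasDerivAt g 0 x := by
    intro x hx
    refine ((hderiv x hx).mul ((hasDerivAt_id x).const_mul (-c)).exp).congr_deriv ?_
    simp only [id]
    ring
  obtain ⟨x, -, hx⟩ := exists_hasDerivAt_eq_slope g (fun _ => 0) hab hg_cont hg_deriv
  have hgab : f b * exp (-c * b) = f a * exp (-c * a) := by
    rw [eq_comm, div_eq_zero_iff, sub_eq_zero, sub_eq_zero] at hx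
    exact hx.resolve_right hab.ne'
  calc f b = f b * exp (-c * b) * exp (c * b) := by rw [mul_assoc, ← exp_add]; simp
    _ = f a * exp (c * (b - a)) := by rw [hgab, mul_assoc, ← exp_add]; ring_nf

theorem sq_eq_mul_deriv_of_integral_sq_eq {F : ℝ → ℝ} (hF : Differentiable ℝ F) {k : ℝ}
    (hk : ∀ t > 0, ∫ u in (0:ℝ)..t, F u ^ 2 = k * (1 - F t ^ 2)) {t : ℝ} (ht : 0 < t) :
    F t ^ 2 = -2 * k * F t * deriv F t := by
  have hintegral : HasDerivAt (fun s => ∫ u in (0:ℝ)..s, F u ^ 2) (F t ^ 2) t :=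
    ((hF.continuous.pow 2).integral_hasStrictDerivAt 0 t).hasDerivAt
  have hrhs : HasDerivAt (fun s => k * (1 - F s ^ 2)) (k * (0 - 2 * F t * deriv F t)) t := by
    refine (((hasDerivAt_const t 1).sub ((hF t).hasDerivAt.pow 2)).const_mul k).congr_deriv ?_
    ring
  have heq : (fun s => ∫ u in (0:ℝ)..s, F u ^ 2) =ᶠ[nhds t] fun s => k * (1 - F s ^ 2) :=
    Filter.eventually_of_mem (Ioi_mem_nhds ht) hk
  rw [(hintegral.congr_of_eventuallyEq heq.symm).unique hrhs]
  ring

theorem eq_exp_of_integral_sq_eq {F : ℝ → ℝ} (hF : Differentiable ℝ F) (h0 : F 0 = 1)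
    (hpos : ∀ t > 0, 0 < F t) {k : ℝ}
    (hk : ∀ t > 0, ∫ u in (0:ℝ)..t, F u ^ 2 = k * (1 - F t ^ 2)) :
    ∀ t ≥ 0, F t = exp (-(2 * k)⁻¹ * t) := by
  have hode : ∀ x > 0, F x = -2 * k * deriv F x := fun x hx =>
    mul_left_cancel₀ (hpos x hx).ne' <| by
      linear_combination sq_eq_mul_deriv_of_integral_sq_eq hF hk hx
  have hk0 : k ≠ 0 := by
    rintro rfl
    linarith [hode 1 one_pos, hpos 1 one_pos]
  intro t ht
  rw [eq_mul_exp_of_hasDerivAt_eq_mul (c := -(2 * k)⁻¹) ht hF.continuous.continuousOn fun x hx =>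
    (hF x).hasDerivAt.congr_deriv (by field_simp; linarith [hode x hx.1]), h0, one_mul, sub_zero]

theorem integral_sq_exp_neg_mul {β : ℝ} (hβ : β ≠ 0) (t : ℝ) :
    ∫ u in (0:ℝ)..t, exp (-β * u) ^ 2 = (1 - exp (-β * t) ^ 2) / (2 * β) := by
  have hderiv : ∀ x, HasDerivAt (fun u => -exp (-β * u) ^ 2 / (2 * β)) (exp (-β * x) ^ 2) x := by
    intro x
    refine ((((hasDerivAt_id x).const_mul (-β)).exp.pow 2).neg.div_const (2 * β)).congr_deriv ?_
    simp only [id]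
    field_simp
    ring
  rw [integral_eq_sub_of_hasDerivAt (fun x _ => hderiv x)
    (Continuous.intervalIntegrable (by fun_prop) _ _), mul_zero, exp_zero]
  ring

/-- The NDSE `η(t) = -(1/2) (∫₀ᵗ F̄²)/(1 - F̄²(t))` is constant on `(0,∞)` if and only
if `X` is exponentially distributed, i.e. `F̄ t = exp (-β t)` for some `β > 0`. -/
theorem ndse_constant_iff_exponential
    (Fbar : ℝ → ℝ) (hdiff : Differentiable ℝ Fbar)
    (h0 : Fbar 0 = 1) (hrange : ∀ t > 0, 0 < Fbar t ∧ Fbar t < 1) :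
    (∃ c : ℝ, ∀ t > 0,
        -(1/2) * (∫ u in (0:ℝ)..t, (Fbar u)^2) / (1 - (Fbar t)^2) = c)
      ↔ (∃ β : ℝ, 0 < β ∧ ∀ t ≥ 0, Fbar t = Real.exp (-β * t)) := by
  have hdenom : ∀ t > 0, 1 - Fbar t ^ 2 ≠ 0 := fun t ht => by
    nlinarith [hrange t ht]
  constructor
  · rintro ⟨c, hc⟩
    have hintegral : ∀ t > 0, ∫ u in (0:ℝ)..t, Fbar u ^ 2 = -2 * c * (1 - Fbar t ^ 2) := by
      intro t ht
      rw [← hc t ht, mul_div_assoc', div_mul_cancel₀ _ (hdenom t ht)]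
      ring
    have hexp := eq_exp_of_integral_sq_eq hdiff h0 (fun t ht => (hrange t ht).1) hintegral
    refine ⟨_, ?_, hexp⟩
    have h1 := (hrange 1 one_pos).2
    rw [hexp 1 zero_le_one, exp_lt_one_iff] at h1
    linarith
  · rintro ⟨β, hβ, hF⟩
    refine ⟨-1 / (4 * β), fun t ht => ?_⟩
    rw [integral_congr fun u hu => by rw [hF u (uIcc_of_le ht.le ▸ hu).1],
      integral_sq_exp_neg_mul hβ.ne', hF t ht.le]
    have hne : 1 - exp (-β * t) ^ 2 ≠ 0 := hF t ht.le ▸ hdenom t ht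
    rw [div_eq_iff hne]
    ring
end

section
/- For the age replacement model with replacement time t > 0, the cumulative residual extropy of the random variable X_{[t]} with survival function R_t(x) = Σ_{n=0}^∞ F̄ⁿ(t)·F̄(x − nt)·1_{[nt,(n+1)t)}(x) equals the NDSE of X: -(1/2)∫₀^∞ R_t²(x) dx = -(1/2)·(∫₀ᵗ F̄²(u) du)/(1 - F̄²(t)). -/
/-!
On the `n`-th replacement cycle `(n t, (n + 1) t)` the survival function `R_t` is `F̄(t)ⁿ` times
the translate of `F̄` by `n t`, so `R_t²` integrates over that cycle to `F̄(t)²ⁿ ∫₀ᵗ F̄²`, and summing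
the geometric series over the cycles gives `(∫₀ᵗ F̄²) / (1 - F̄(t)²)`. The same comparison on the
first cycle shows that if `F̄²` is not integrable on `(0, t]`, then `R_t²` is not integrable on
`(0, ∞)`, and both sides are `0` by the convention for undefined integrals.
-/

open Real MeasureTheory Set intervalIntegral

section Partition

variable {α : Type*} [Ring α] [LinearOrder α] [IsStrictOrderedRing α]

theorem pairwise_disjoint_Ioc_natCast_mul (t : α) :
    Pairwise (Function.onFun Disjoint fun n : ℕ => Ioc (n * t) ((n + 1) * t)) := by
  intro m n hmn
  simpa [zsmul_eq_mul] using
    pairwise_disjoint_Ioc_add_zsmul (0 : α) t (Nat.cast_injective.ne hmn : (m : ℤ) ≠ n)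

theorem pairwise_disjoint_Ico_natCast_mul (t : α) :
    Pairwise (Function.onFun Disjoint fun n : ℕ => Ico (n * t) ((n + 1) * t)) := by
  intro m n hmn
  simpa [zsmul_eq_mul] using
    pairwise_disjoint_Ico_add_zsmul (0 : α) t (Nat.cast_injective.ne hmn : (m : ℤ) ≠ n)

theorem iUnion_Ioc_natCast_mul [Archimedean α] {t : α} (ht : 0 < t) :
    ⋃ n : ℕ, Ioc (n * t) ((n + 1) * t) = Ioi 0 := by
  refine Subset.antisymm (iUnion_subset fun n x hx => ?_) fun x hx => ?_
  · exact lt_of_le_of_lt (by positivity) hx.1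
  · obtain ⟨n, hn⟩ := mem_iUnion.1 ((iUnion_Ioc_zsmul ht).ge (mem_univ x))
    simp only [zsmul_eq_mul, Int.cast_add, Int.cast_one] at hn
    have hn0 : 0 ≤ n := by
      have : (0 : α) < n + 1 := pos_of_mul_pos_left (hx.out.trans_le hn.2) ht.le
      have : (-1 : ℤ) < n := by exact_mod_cast (neg_lt_iff_pos_add.2 this : (-1 : α) < n)
      omega
    lift n to ℕ using hn0
    exact mem_iUnion.2 ⟨n, by simpa using hn⟩

end Partition

theorem tsum_mul_indicator_Ico_natCast_mul (a : ℕ → ℝ) {t x : ℝ} {n : ℕ}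
    (hx : x ∈ Ico (n * t) ((n + 1) * t)) :
    ∑' m : ℕ, a m * (Ico ((m : ℝ) * t) ((m + 1) * t)).indicator (fun _ => 1) x = a n := by
  rw [tsum_eq_single n fun m hm => ?_, indicator_of_mem hx, mul_one]
  rw [indicator_of_notMem ((pairwise_disjoint_Ico_natCast_mul t hm).notMem_of_mem_right hx),
    mul_zero]

section GeometricPeriodicExtension

variable {f g : ℝ → ℝ} {q t : ℝ}

theorem ae_restrict_Ioc_eq_of_eqOn_Ioo {β : Type*} {a b : ℝ} {f₁ f₂ : ℝ → β}
    (h : EqOn f₁ f₂ (Ioo a b)) :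
    f₁ =ᵐ[volume.restrict (Ioc a b)] f₂ := by
  rw [Measure.restrict_congr_set Ioo_ae_eq_Ioc.symm]
  exact (ae_restrict_iff' measurableSet_Ioo).2 (Filter.Eventually.of_forall h)

theorem integrableOn_Ioc_natCast_mul_of_eqOn (ht : 0 ≤ t) (n : ℕ)
    (hf : EqOn f (fun x => q ^ n * g (x - n * t)) (Ioo (n * t) ((n + 1) * t)))
    (hg : IntegrableOn g (Ioc 0 t)) :
    IntegrableOn f (Ioc (n * t) ((n + 1) * t)) := by
  have hle : (n : ℝ) * t ≤ (n + 1) * t := by nlinarith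
  refine IntegrableOn.congr_fun_ae ?_ (ae_restrict_Ioc_eq_of_eqOn_Ioo hf).symm
  rw [← intervalIntegrable_iff_integrableOn_Ioc_of_le hle]
  have := (((intervalIntegrable_iff_integrableOn_Ioc_of_le ht).2 hg).comp_sub_right
    (n * t)).const_mul (q ^ n)
  simpa [add_mul, add_comm] using this

theorem setIntegral_Ioc_natCast_mul_of_eqOn (ht : 0 ≤ t) (n : ℕ)
    (hf : EqOn f (fun x => q ^ n * g (x - n * t)) (Ioo (n * t) ((n + 1) * t))) :
    ∫ x in Ioc (n * t) ((n + 1) * t), f x = q ^ n * ∫ u in 0..t, g u := by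
  have hle : (n : ℝ) * t ≤ (n + 1) * t := by nlinarith
  rw [integral_congr_ae (ae_restrict_Ioc_eq_of_eqOn_Ioo hf), ← integral_of_le hle,
    intervalIntegral.integral_const_mul, integral_comp_sub_right]
  congr 2 <;> ring

theorem integral_Ioi_eq_geometric_of_eqOn (ht : 0 < t) (hq : |q| < 1)
    (hf : ∀ n : ℕ, EqOn f (fun x => q ^ n * g (x - n * t)) (Ioo (n * t) ((n + 1) * t))) :
    ∫ x in Ioi 0, f x = (1 - q)⁻¹ * ∫ u in 0..t, g u := by
  by_cases hg : IntegrableOn g (Ioc 0 t)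
  · have hnorm : ∀ n : ℕ, EqOn (fun x => ‖f x‖) (fun x => |q| ^ n * ‖g (x - n * t)‖)
        (Ioo (n * t) ((n + 1) * t)) := fun n x hx => by
      simp [hf n hx]
    have hsum : Summable fun n : ℕ => ∫ x in Ioc (n * t) ((n + 1) * t), ‖f x‖ :=
      ((summable_geometric_of_abs_lt_one (by rwa [abs_abs])).mul_right _).congr fun n =>
        (setIntegral_Ioc_natCast_mul_of_eqOn (f := fun x => ‖f x‖) (g := fun u => ‖g u‖)
          ht.le n (hnorm n)).symm
    have hint := integrableOn_iUnion_of_summable_integral_norm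
      (fun n => integrableOn_Ioc_natCast_mul_of_eqOn ht.le n (hf n) hg) hsum
    rw [← iUnion_Ioc_natCast_mul ht, integral_iUnion (fun _ => measurableSet_Ioc)
      (pairwise_disjoint_Ioc_natCast_mul t) hint]
    simp_rw [setIntegral_Ioc_natCast_mul_of_eqOn ht.le _ (hf _)]
    rw [tsum_mul_right, tsum_geometric_of_abs_lt_one hq]
  · have hfg : IntegrableOn f (Ioc 0 t) ↔ IntegrableOn g (Ioc 0 t) :=
      integrableOn_congr_fun_ae (ae_restrict_Ioc_eq_of_eqOn_Ioo (by simpa using hf 0))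
    have hf_int : ¬IntegrableOn f (Ioi 0) := fun h => hg (hfg.1 (h.mono_set Ioc_subset_Ioi_self))
    have hg_int : ¬IntervalIntegrable g volume 0 t :=
      fun h => hg ((intervalIntegrable_iff_integrableOn_Ioc_of_le ht.le).1 h)
    rw [MeasureTheory.integral_undef hf_int, intervalIntegral.integral_undef hg_int, mul_zero]

end GeometricPeriodicExtension

/-- The cumulative residual extropy of the age replacement model survival function
`R_t(x) = ∑ₙ F̄(t)ⁿ F̄(x - n t) 1_{[nt,(n+1)t)}(x)` equals the NDSE of `X`:
`-(1/2) ∫₀^∞ R_t² = -(1/2) (∫₀ᵗ F̄²)/(1 - F̄²(t))`. -/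
theorem crj_age_replacement_eq_ndse
    (Fbar : ℝ → ℝ) (t : ℝ) (ht : 0 < t)
    (hF : 0 < Fbar t ∧ Fbar t < 1)
    (R : ℝ → ℝ)
    (hR : ∀ x : ℝ, R x =
      ∑' n : ℕ, (Fbar t) ^ n * Fbar (x - n * t) *
        Set.indicator (Set.Ico ((n : ℝ) * t) ((n + 1 : ℝ) * t)) (fun _ => (1 : ℝ)) x) :
    -(1/2) * ∫ x in Set.Ioi (0:ℝ), (R x)^2
      = -(1/2) * (∫ u in (0:ℝ)..t, (Fbar u)^2) / (1 - (Fbar t)^2) := by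
  have hR_sq : ∀ n : ℕ, EqOn (fun x => R x ^ 2)
      (fun x => (Fbar t ^ 2) ^ n * Fbar (x - n * t) ^ 2) (Ioo (n * t) ((n + 1) * t)) := fun n x hx => by
    dsimp only
    rw [hR x, tsum_mul_indicator_Ico_natCast_mul (fun m => Fbar t ^ m * Fbar (x - m * t))
      (Ioo_subset_Ico_self hx)]
    ring
  have hq : |Fbar t ^ 2| < 1 := by
    rw [abs_of_nonneg (sq_nonneg _)]
    exact pow_lt_one₀ hF.1.le hF.2 two_ne_zero
  rw [integral_Ioi_eq_geometric_of_eqOn (g := fun u => Fbar u ^ 2) ht hq hR_sq]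
  ring
end
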